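/- Let m be a positive integer and let f be a holomorphic function on the open unit disk in ℂ that extends continuously to the closed disk. Suppose that the boundary Fourier coefficients ∫₀^{2π} f(e^{iθ})·e^{−ikθ} dθ vanish for every integer k ≥ m. Then f is a polynomial of degree at most m − 1; i.e., there exist a₀, …, a_{m−1} ∈ ℂ with f(z) = a₀ + a₁z + ⋯ + a_{m−1}z^{m−1} for all z in the disk. -/

import Mathlib

/-!
By the Cauchy integral formula, `f` is the sum on the disk of its Cauchy power series, whose
`n`-th coefficient is, up to the factor `2π`, the `n`-th boundary Fourier coefficient of `f`.
The hypothesis therefore kills every coefficient of index at least `m`, and the power series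
collapses to its partial sum of order `m`.
-/

open Complex Metric Real

theorem cauchyPowerSeries_coeff_eq_integral_mul_exp (f : ℂ → ℂ) (c : ℂ) {R : ℝ} (hR : R ≠ 0)
    (n : ℕ) :
    (cauchyPowerSeries f c R).coeff n = (2 * π : ℂ)⁻¹ * (R : ℂ)⁻¹ ^ n *
      ∫ θ in (0:ℝ)..2 * π, f (circleMap c R θ) * exp (-(n : ℂ) * θ * I) := by
  have hexp (θ : ℝ) : exp (-(n : ℂ) * θ * I) = (exp (θ * I))⁻¹ ^ n := by
    rw [← Complex.exp_neg, ← Complex.exp_nat_mul]; ring_nf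
  change cauchyPowerSeries f c R n (fun _ => 1) = _
  rw [cauchyPowerSeries_apply, circleIntegral, smul_eq_mul,
    ← intervalIntegral.integral_const_mul, ← intervalIntegral.integral_const_mul]
  refine intervalIntegral.integral_congr fun θ _ => ?_
  have hR' : (R : ℂ) ≠ 0 := ofReal_ne_zero.2 hR
  have he : exp (θ * I) ≠ 0 := Complex.exp_ne_zero _
  simp only [deriv_circleMap, circleMap, zero_add, smul_eq_mul, hexp]
  field_simp
  ring

section FiniteSeries

variable {𝕜 E : Type*} [NontriviallyNormedField 𝕜] [NormedAddCommGroup E] [NormedSpace 𝕜 E]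
  {f : 𝕜 → E} {p : FormalMultilinearSeries 𝕜 𝕜 E} {x : 𝕜} {r : ENNReal} {m : ℕ}

theorem HasFPowerSeriesOnBall.hasFiniteFPowerSeriesOnBall_of_coeff_eq_zero
    (hf : HasFPowerSeriesOnBall f p x r) (hp : ∀ n, m ≤ n → p.coeff n = 0) :
    HasFiniteFPowerSeriesOnBall f p x m r :=
  ⟨hf, fun n hn => FormalMultilinearSeries.coeff_eq_zero.1 (hp n hn)⟩

theorem HasFiniteFPowerSeriesOnBall.eq_sum_pow_smul_coeff
    (hf : HasFiniteFPowerSeriesOnBall f p x m r) {y : 𝕜} (hy : y ∈ Metric.eball x r) :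
    f y = ∑ j ∈ Finset.range m, (y - x) ^ j • p.coeff j := by
  rw [hf.eq_partialSum' y hy m le_rfl, FormalMultilinearSeries.partialSum]
  simp only [FormalMultilinearSeries.apply_eq_pow_smul_coeff]

end FiniteSeries

theorem stmt17_general (m : ℕ) (f : ℂ → ℂ)
    (hf : DifferentiableOn ℂ f (Metric.ball 0 1))
    (hc : ContinuousOn f (Metric.closedBall 0 1))
    (hcoef : ∀ k : ℤ, (m : ℤ) ≤ k →
      ∫ θ in (0:ℝ)..(2 * Real.pi),
        f (Complex.exp ((θ : ℂ) * Complex.I)) *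
          Complex.exp (-(k : ℂ) * (θ : ℂ) * Complex.I) = 0) :
    ∃ a : ℕ → ℂ, ∀ z ∈ Metric.ball (0 : ℂ) 1,
      f z = ∑ j ∈ Finset.range m, a j * z ^ j := by
  have hdc : DiffContOnCl ℂ f (ball (0 : ℂ) 1) := ⟨hf, by rwa [closure_ball 0 one_ne_zero]⟩
  have hseries : HasFPowerSeriesOnBall f (cauchyPowerSeries f 0 1) 0 1 := by
    simpa using hdc.hasFPowerSeriesOnBall (R := 1) one_pos
  have hfin := hseries.hasFiniteFPowerSeriesOnBall_of_coeff_eq_zero (m := m) fun n hn => by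
    have h := hcoef n (by exact_mod_cast hn)
    push_cast at h
    rw [cauchyPowerSeries_coeff_eq_integral_mul_exp f 0 one_ne_zero]
    simp only [circleMap, ofReal_one, one_mul, zero_add, h, mul_zero]
  refine ⟨(cauchyPowerSeries f 0 1).coeff, fun z hz => ?_⟩
  rw [hfin.eq_sum_pow_smul_coeff (by simpa [← ENNReal.coe_one, Metric.eball_coe] using hz)]
  simp only [sub_zero, smul_eq_mul, mul_comm]

/-- A holomorphic function on the unit disk, continuous up to the boundary, whose
boundary Fourier coefficients vanish for all modes `k ≥ m`, is a polynomial of degree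
at most `m − 1`. -/
theorem stmt17 (m : ℕ) (hm : 0 < m) (f : ℂ → ℂ)
    (hf : DifferentiableOn ℂ f (Metric.ball 0 1))
    (hc : ContinuousOn f (Metric.closedBall 0 1))
    (hcoef : ∀ k : ℤ, (m : ℤ) ≤ k →
      ∫ θ in (0:ℝ)..(2 * Real.pi),
        f (Complex.exp ((θ : ℂ) * Complex.I)) *
          Complex.exp (-(k : ℂ) * (θ : ℂ) * Complex.I) = 0) :
    ∃ a : ℕ → ℂ, ∀ z ∈ Metric.ball (0 : ℂ) 1,
      f z = ∑ j ∈ Finset.range m, a j * z ^ j :=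
  stmt17_general m f hf hc hcoef
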